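/- Let p > 1 and 0 < B < p−1 be real numbers, and set γ = (p−1−B)/(p−1) ∈ (0,1). Let Ω ⊆ ℝ^N be open and let v : Ω → ℝ be everywhere positive, twice continuously differentiable, with nonvanishing gradient, satisfying −Δ_p v = γ^{p−1}·v^{((γ−1)(p−1)+1)/γ} at every point of Ω. Then the function φ = v^{1/γ} satisfies −Δ_p φ + B|∇φ|^p/φ = φ at every point of Ω. -/

import Mathlib

/-- The `p`-Laplacian `Δ_p f(x) = div(|∇f|^{p−2}∇f)(x) = ∑ᵢ ∂ᵢ(|∇f|^{p−2} ∂ᵢf)(x)`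
of a function `f : ℝ^N → ℝ`. -/
noncomputable def pLaplacian {N : ℕ} (p : ℝ) (f : EuclideanSpace ℝ (Fin N) → ℝ)
    (x : EuclideanSpace ℝ (Fin N)) : ℝ :=
  ∑ i : Fin N,
    fderiv ℝ
      (fun y => ‖gradient f y‖ ^ (p - 2) * fderiv ℝ f y (EuclideanSpace.single i (1 : ℝ)))
      x (EuclideanSpace.single i (1 : ℝ))

/-!
For `φ = v ^ a` with `a > 0` the flux `|∇φ|^{p-2} ∂ᵢφ` is `(a v^{a-1})^{p-1}` times the flux of `v`,
so the product rule gives, with `c = (a-1)(p-1)`,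
`Δ_p φ = a^{p-1} v^c Δ_p v + a^{p-1} c v^{c-1} |∇v|^p`, while `B |∇φ|^p / φ = B a^p v^{c-1} |∇v|^p`.
For `a = 1/γ` the choice of `γ` means exactly `B a = c`, so the gradient terms cancel, and the
exponent of the Lane–Emden equation is the one for which
`a^{p-1} v^c · γ^{p-1} v^{((γ-1)(p-1)+1)/γ} = v^a`.
-/

open Filter Topology

theorem gradient_rpow_const_comp {F : Type*} [NormedAddCommGroup F] [InnerProductSpace ℝ F]
    [CompleteSpace F] {v : F → ℝ} {y : F} (hv : DifferentiableAt ℝ v y)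
    (hpos : 0 < v y) (a : ℝ) :
    gradient (fun z => v z ^ a) y = (a * v y ^ (a - 1)) • gradient v y := by
  rw [gradient, (hv.hasFDerivAt.rpow_const (Or.inl hpos.ne')).fderiv, map_smul, gradient]

section PLaplacian

variable {N : ℕ}

noncomputable def pFlux (p : ℝ) (f : EuclideanSpace ℝ (Fin N) → ℝ) (i : Fin N)
    (y : EuclideanSpace ℝ (Fin N)) : ℝ :=
  ‖gradient f y‖ ^ (p - 2) * fderiv ℝ f y (EuclideanSpace.single i 1)

theorem pLaplacian_eq_sum_fderiv_pFlux (p : ℝ) (f : EuclideanSpace ℝ (Fin N) → ℝ)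
    (x : EuclideanSpace ℝ (Fin N)) :
    pLaplacian p f x = ∑ i, fderiv ℝ (pFlux p f i) x (EuclideanSpace.single i 1) :=
  rfl

theorem fderiv_apply_single_eq_gradient_apply (f : EuclideanSpace ℝ (Fin N) → ℝ)
    (x : EuclideanSpace ℝ (Fin N)) (i : Fin N) :
    fderiv ℝ f x (EuclideanSpace.single i 1) = gradient f x i := by
  rw [← inner_gradient_left, EuclideanSpace.inner_single_right]
  simp

theorem sum_pFlux_mul_fderiv_apply_single {p : ℝ} {f : EuclideanSpace ℝ (Fin N) → ℝ}
    {x : EuclideanSpace ℝ (Fin N)} (hx : gradient f x ≠ 0) :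
    ∑ i, pFlux p f i x * fderiv ℝ f x (EuclideanSpace.single i 1) = ‖gradient f x‖ ^ p := by
  have hnorm : 0 < ‖gradient f x‖ := norm_pos_iff.mpr hx
  simp only [pFlux, fderiv_apply_single_eq_gradient_apply, mul_assoc, ← Finset.mul_sum, ← sq,
    ← EuclideanSpace.real_norm_sq_eq]
  rw [← Real.rpow_two, ← Real.rpow_add hnorm]
  ring_nf

theorem differentiableAt_pFlux {p : ℝ} {f : EuclideanSpace ℝ (Fin N) → ℝ}
    {x : EuclideanSpace ℝ (Fin N)} (hf : ContDiffAt ℝ 2 f x) (hx : gradient f x ≠ 0) (i : Fin N) :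
    DifferentiableAt ℝ (pFlux p f i) x := by
  have hfderiv : DifferentiableAt ℝ (fderiv ℝ f) x :=
    (hf.fderiv_right (by norm_num)).differentiableAt one_ne_zero
  have hgrad : DifferentiableAt ℝ (gradient f) x :=
    (InnerProductSpace.toDual ℝ _).symm.differentiableAt.comp x hfderiv
  exact ((hgrad.norm ℝ hx).rpow_const (Or.inl (norm_ne_zero_iff.mpr hx))).mul
    (hfderiv.clm_apply (differentiableAt_const _))

theorem pLaplacian_eq_of_pFlux_eventuallyEq_mul {p h' : ℝ} {h : ℝ → ℝ}
    {φ v : EuclideanSpace ℝ (Fin N) → ℝ} {x : EuclideanSpace ℝ (Fin N)}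
    (hflux : ∀ i, pFlux p φ i =ᶠ[𝓝 x] fun y => h (v y) * pFlux p v i y)
    (hh : HasDerivAt h h' (v x)) (hv : ContDiffAt ℝ 2 v x) (hx : gradient v x ≠ 0) :
    pLaplacian p φ x = h (v x) * pLaplacian p v x + h' * ‖gradient v x‖ ^ p := by
  have hsummand : ∀ i, fderiv ℝ (pFlux p φ i) x (EuclideanSpace.single i 1)
      = h (v x) * fderiv ℝ (pFlux p v i) x (EuclideanSpace.single i 1)
        + h' * (pFlux p v i x * fderiv ℝ v x (EuclideanSpace.single i 1)) := by
    intro i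
    have hprod : HasFDerivAt (fun y => h (v y) * pFlux p v i y) _ x :=
      (hh.comp_hasFDerivAt x (hv.differentiableAt two_ne_zero).hasFDerivAt).fun_mul
        (differentiableAt_pFlux hv hx i).hasFDerivAt
    rw [(hflux i).fderiv_eq, hprod.fderiv]
    simp only [add_apply, smul_apply, smul_eq_mul, Function.comp_apply]
    ring
  simp only [pLaplacian_eq_sum_fderiv_pFlux, hsummand, Finset.sum_add_distrib, ← Finset.mul_sum,
    sum_pFlux_mul_fderiv_apply_single hx]

theorem pFlux_rpow_const_comp {p a : ℝ} (ha : 0 < a) {v : EuclideanSpace ℝ (Fin N) → ℝ}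
    {y : EuclideanSpace ℝ (Fin N)} (hv : DifferentiableAt ℝ v y) (hpos : 0 < v y) (i : Fin N) :
    pFlux p (fun z => v z ^ a) i y = a ^ (p - 1) * v y ^ ((a - 1) * (p - 1)) * pFlux p v i y := by
  have hk : 0 < a * v y ^ (a - 1) := mul_pos ha (Real.rpow_pos_of_pos hpos _)
  have hk_rpow : (a * v y ^ (a - 1)) ^ (p - 1) = a ^ (p - 1) * v y ^ ((a - 1) * (p - 1)) := by
    rw [Real.mul_rpow ha.le (Real.rpow_pos_of_pos hpos _).le, ← Real.rpow_mul hpos.le]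
  rw [pFlux, pFlux, gradient_rpow_const_comp hv hpos, (hv.hasFDerivAt.rpow_const
    (Or.inl hpos.ne')).fderiv, norm_smul, Real.norm_of_nonneg hk.le, ← hk_rpow,
    Real.mul_rpow hk.le (norm_nonneg _), smul_apply, smul_eq_mul,
    show p - 1 = (p - 2) + 1 by ring, Real.rpow_add_one hk.ne']
  ring

theorem pLaplacian_rpow_const_comp {p a : ℝ} (ha : 0 < a) {v : EuclideanSpace ℝ (Fin N) → ℝ}
    {x : EuclideanSpace ℝ (Fin N)} (hv : ContDiffAt ℝ 2 v x) (hpos : ∀ᶠ y in 𝓝 x, 0 < v y)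
    (hx : gradient v x ≠ 0) :
    pLaplacian p (fun y => v y ^ a) x
      = a ^ (p - 1) * v x ^ ((a - 1) * (p - 1)) * pLaplacian p v x
        + a ^ (p - 1) * ((a - 1) * (p - 1)) * v x ^ ((a - 1) * (p - 1) - 1)
          * ‖gradient v x‖ ^ p := by
  have hflux : ∀ i, pFlux p (fun y => v y ^ a) i
      =ᶠ[𝓝 x] fun y => a ^ (p - 1) * v y ^ ((a - 1) * (p - 1)) * pFlux p v i y := fun i => by
    filter_upwards [hpos, hv.eventually (by simp)] with y hy hvy
    exact pFlux_rpow_const_comp ha (hvy.differentiableAt two_ne_zero) hy i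
  have hh := (Real.hasDerivAt_rpow_const (p := (a - 1) * (p - 1))
    (Or.inl hpos.self_of_nhds.ne')).const_mul (a ^ (p - 1))
  rw [pLaplacian_eq_of_pFlux_eventuallyEq_mul hflux hh hv hx]
  ring

theorem norm_gradient_rpow_const_comp_rpow {p a : ℝ} (ha : 0 < a)
    {v : EuclideanSpace ℝ (Fin N) → ℝ} {x : EuclideanSpace ℝ (Fin N)}
    (hv : DifferentiableAt ℝ v x) (hpos : 0 < v x) :
    ‖gradient (fun y => v y ^ a) x‖ ^ p = a ^ p * v x ^ ((a - 1) * p) * ‖gradient v x‖ ^ p := by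
  have hk : 0 < a * v x ^ (a - 1) := mul_pos ha (Real.rpow_pos_of_pos hpos _)
  rw [gradient_rpow_const_comp hv hpos, norm_smul, Real.norm_of_nonneg hk.le,
    Real.mul_rpow hk.le (norm_nonneg _), Real.mul_rpow ha.le (Real.rpow_pos_of_pos hpos _).le,
    ← Real.rpow_mul hpos.le]

theorem neg_pLaplacian_rpow_const_comp_add {p a B : ℝ} (ha : 0 < a)
    {v : EuclideanSpace ℝ (Fin N) → ℝ} {x : EuclideanSpace ℝ (Fin N)} (hv : ContDiffAt ℝ 2 v x)
    (hpos : ∀ᶠ y in 𝓝 x, 0 < v y) (hx : gradient v x ≠ 0) :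
    -pLaplacian p (fun y => v y ^ a) x + B * ‖gradient (fun y => v y ^ a) x‖ ^ p / v x ^ a
      = a ^ (p - 1) * v x ^ ((a - 1) * (p - 1)) * -pLaplacian p v x
        + (B * a - (a - 1) * (p - 1)) * a ^ (p - 1) * v x ^ ((a - 1) * (p - 1) - 1)
          * ‖gradient v x‖ ^ p := by
  have hvx : 0 < v x := hpos.self_of_nhds
  have hexp : v x ^ ((a - 1) * p) = v x ^ ((a - 1) * (p - 1) - 1) * v x ^ a := by
    rw [← Real.rpow_add hvx]
    ring_nf
  have ha_rpow : a ^ p = a ^ (p - 1) * a := by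
    rw [← Real.rpow_add_one ha.ne']
    ring_nf
  rw [pLaplacian_rpow_const_comp ha hv hpos hx,
    norm_gradient_rpow_const_comp_rpow ha (hv.differentiableAt two_ne_zero) hvx, hexp, ha_rpow]
  field_simp
  ring

end PLaplacian

theorem stmt7_general {N : ℕ} (p B : ℝ) (hp : 1 < p) (hB : B < p - 1)
    (γ : ℝ) (hγ : γ = (p - 1 - B) / (p - 1))
    (Ω : Set (EuclideanSpace ℝ (Fin N))) (hΩ : IsOpen Ω)
    (v : EuclideanSpace ℝ (Fin N) → ℝ)
    (hpos : ∀ x ∈ Ω, 0 < v x)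
    (hreg : ContDiffOn ℝ 2 v Ω)
    (hgrad : ∀ x ∈ Ω, gradient v x ≠ 0)
    (hpde : ∀ x ∈ Ω,
      -pLaplacian p v x = γ ^ (p - 1) * v x ^ (((γ - 1) * (p - 1) + 1) / γ)) :
    ∀ x ∈ Ω,
      -pLaplacian p (fun y => v y ^ (1 / γ)) x
        + B * ‖gradient (fun y => v y ^ (1 / γ)) x‖ ^ p / v x ^ (1 / γ)
        = v x ^ (1 / γ) := by
  intro x hx
  have hp1 : 0 < p - 1 := by linarith
  have hγ0 : 0 < γ := hγ ▸ div_pos (by linarith) hp1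
  have hvx : 0 < v x := hpos x hx
  have hΩx : Ω ∈ 𝓝 x := hΩ.mem_nhds hx
  rw [neg_pLaplacian_rpow_const_comp_add (one_div_pos.2 hγ0) (hreg.contDiffAt hΩx)
    (eventually_of_mem hΩx hpos) (hgrad x hx), hpde x hx]
  have hgradient_term : B * (1 / γ) - (1 / γ - 1) * (p - 1) = 0 := by
    have hpB : p - 1 - B ≠ 0 := by linarith
    rw [hγ]
    field_simp
    ring
  have hreaction_term : (1 / γ) ^ (p - 1) * v x ^ ((1 / γ - 1) * (p - 1))
      * (γ ^ (p - 1) * v x ^ (((γ - 1) * (p - 1) + 1) / γ)) = v x ^ (1 / γ) := by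
    rw [mul_mul_mul_comm, ← Real.mul_rpow (by positivity) hγ0.le, one_div_mul_cancel hγ0.ne',
      Real.one_rpow, one_mul, ← Real.rpow_add hvx]
    congr 1
    field_simp
    ring
  rw [hgradient_term, hreaction_term]
  ring

/-- **Elliptic change of unknown.**
Let `p > 1`, `0 < B < p−1`, `γ = (p−1−B)/(p−1) ∈ (0,1)`. If `v > 0` is twice
continuously differentiable on the open set `Ω`, with nonvanishing gradient,
and satisfies `−Δ_p v = γ^{p−1} v^{((γ−1)(p−1)+1)/γ}` on `Ω`, then
`φ = v^{1/γ}` satisfies `−Δ_p φ + B|∇φ|^p/φ = φ` on `Ω`. -/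
theorem stmt7 {N : ℕ} (p B : ℝ) (hp : 1 < p) (hB0 : 0 < B) (hB : B < p - 1)
    (γ : ℝ) (hγ : γ = (p - 1 - B) / (p - 1))
    (Ω : Set (EuclideanSpace ℝ (Fin N))) (hΩ : IsOpen Ω)
    (v : EuclideanSpace ℝ (Fin N) → ℝ)
    (hpos : ∀ x ∈ Ω, 0 < v x)
    (hreg : ContDiffOn ℝ 2 v Ω)
    (hgrad : ∀ x ∈ Ω, gradient v x ≠ 0)
    (hpde : ∀ x ∈ Ω,
      -pLaplacian p v x = γ ^ (p - 1) * v x ^ (((γ - 1) * (p - 1) + 1) / γ)) :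
    ∀ x ∈ Ω,
      -pLaplacian p (fun y => v y ^ (1 / γ)) x
        + B * ‖gradient (fun y => v y ^ (1 / γ)) x‖ ^ p / v x ^ (1 / γ)
        = v x ^ (1 / γ) :=
  stmt7_general p B hp hB γ hγ Ω hΩ v hpos hreg hgrad hpde
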